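/- arXiv:1402.6530 — 7 statements merged into one kernel-verified Lean document; each statement's English description precedes it below -/
import Mathlib

section
/- For a contraction T with constant L ∈ (0,1) on a closed convex subset C of a normed space, fixed point p, and the S-iteration a_{n+1} = (1-α_n) T a_n + α_n T b_n, b_n = (1-β_n) a_n + β_n T a_n with λ ≤ α_n, β_n < 1 for some λ > 0, one has ‖a_{n+1} - p‖ ≤ L(1 - λ²(1-L)) ‖a_n - p‖ for all n, and hence ‖a_n - p‖ ≤ [L(1 - λ²(1-L))]^{n-1} ‖a_1 - p‖. -/
/-!
Both steps of the S-iteration are convex combinations, so the distance to `p` is at most the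
same convex combination of distances. The inner Mann step `b = (1 - β) a + β T a` shrinks the
distance by the factor `1 - β (1 - L)`, and the outer step then gives
`‖a' - p‖ ≤ L ((1 - α) + α (1 - β (1 - L))) ‖a - p‖ = L (1 - α β (1 - L)) ‖a - p‖`, which is at
most the uniform rate `L (1 - λ² (1 - L))`. Iterating gives the geometric bound.
-/

lemma Convex.sub_smul_add_smul_mem {E : Type*} [AddCommGroup E] [Module ℝ E] {C : Set E}
    (hC : Convex ℝ C) {x y : E} (hx : x ∈ C) (hy : y ∈ C) {t : ℝ} (ht₀ : 0 ≤ t) (ht₁ : t ≤ 1) : (1 - t) • x + t • y ∈ C :=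
  hC hx hy (sub_nonneg.2 ht₁) ht₀ (sub_add_cancel 1 t)

lemma norm_sub_smul_add_smul_sub_le {E : Type*} [SeminormedAddCommGroup E] [NormedSpace ℝ E]
    (x y p : E) {t : ℝ} (ht₀ : 0 ≤ t) (ht₁ : t ≤ 1) :
    ‖(1 - t) • x + t • y - p‖ ≤ (1 - t) * ‖x - p‖ + t * ‖y - p‖ := by
  have hsplit : (1 - t) • x + t • y - p = (1 - t) • (x - p) + t • (y - p) := by module
  rw [hsplit, ← norm_smul_of_nonneg (sub_nonneg.2 ht₁), ← norm_smul_of_nonneg ht₀]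
  exact norm_add_le _ _

lemma le_pow_mul_of_le_mul {u : ℕ → ℝ} {r : ℝ} (hr : 0 ≤ r) (hu : ∀ n, u (n + 1) ≤ r * u n)
    (n : ℕ) : u n ≤ r ^ n * u 0 := by
  induction n with
  | zero => simp
  | succ n ih =>
    calc u (n + 1) ≤ r * u n := hu n
      _ ≤ r * (r ^ n * u 0) := mul_le_mul_of_nonneg_left ih hr
      _ = r ^ (n + 1) * u 0 := by ring

lemma norm_apply_sub_fixedPoint_le {E : Type*} [SeminormedAddCommGroup E] {C : Set E}
    {T : E → E} {L : ℝ} (hT : ∀ x ∈ C, ∀ y ∈ C, ‖T x - T y‖ ≤ L * ‖x - y‖) {p : E}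
    (hpC : p ∈ C) (hp : T p = p) {x : E} (hx : x ∈ C) : ‖T x - p‖ ≤ L * ‖x - p‖ := by
  simpa only [hp] using hT x hx p hpC

section SIteration

variable {E : Type*} [NormedAddCommGroup E] [NormedSpace ℝ E] {C : Set E} {T : E → E} {L : ℝ}
  {p : E}

lemma norm_mann_step_sub_le (hT : ∀ x ∈ C, ∀ y ∈ C, ‖T x - T y‖ ≤ L * ‖x - y‖) (hpC : p ∈ C)
    (hp : T p = p) {x : E} (hx : x ∈ C) {β : ℝ} (hβ₀ : 0 ≤ β) (hβ₁ : β ≤ 1) :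
    ‖(1 - β) • x + β • T x - p‖ ≤ (1 - β * (1 - L)) * ‖x - p‖ :=
  calc ‖(1 - β) • x + β • T x - p‖ ≤ (1 - β) * ‖x - p‖ + β * ‖T x - p‖ :=
        norm_sub_smul_add_smul_sub_le _ _ _ hβ₀ hβ₁
    _ ≤ (1 - β) * ‖x - p‖ + β * (L * ‖x - p‖) := by
        gcongr
        exact norm_apply_sub_fixedPoint_le hT hpC hp hx
    _ = (1 - β * (1 - L)) * ‖x - p‖ := by ring

variable (T) in
def sStep (α β : ℝ) (x : E) : E :=
  (1 - α) • T x + α • T ((1 - β) • x + β • T x)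

lemma sStep_mem (hC : Convex ℝ C) (hTC : Set.MapsTo T C C) {x : E} (hx : x ∈ C) {α β : ℝ}
    (hα₀ : 0 ≤ α) (hα₁ : α ≤ 1) (hβ₀ : 0 ≤ β) (hβ₁ : β ≤ 1) : sStep T α β x ∈ C :=
  hC.sub_smul_add_smul_mem (hTC hx)
    (hTC (hC.sub_smul_add_smul_mem hx (hTC hx) hβ₀ hβ₁)) hα₀ hα₁

lemma norm_sStep_sub_le (hC : Convex ℝ C) (hTC : Set.MapsTo T C C) (hL : 0 ≤ L)
    (hT : ∀ x ∈ C, ∀ y ∈ C, ‖T x - T y‖ ≤ L * ‖x - y‖) (hpC : p ∈ C) (hp : T p = p)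
    {x : E} (hx : x ∈ C) {α β : ℝ} (hα₀ : 0 ≤ α) (hα₁ : α ≤ 1) (hβ₀ : 0 ≤ β) (hβ₁ : β ≤ 1) :
    ‖sStep T α β x - p‖ ≤ L * (1 - α * β * (1 - L)) * ‖x - p‖ := by
  set y := (1 - β) • x + β • T x
  have hyC : y ∈ C := hC.sub_smul_add_smul_mem hx (hTC hx) hβ₀ hβ₁
  calc ‖(1 - α) • T x + α • T y - p‖ ≤ (1 - α) * ‖T x - p‖ + α * ‖T y - p‖ :=
        norm_sub_smul_add_smul_sub_le _ _ _ hα₀ hα₁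
    _ ≤ (1 - α) * (L * ‖x - p‖) + α * (L * ((1 - β * (1 - L)) * ‖x - p‖)) := by
        have := sub_nonneg.2 hα₁
        gcongr
        · exact norm_apply_sub_fixedPoint_le hT hpC hp hx
        · exact (norm_apply_sub_fixedPoint_le hT hpC hp hyC).trans
            (mul_le_mul_of_nonneg_left (norm_mann_step_sub_le hT hpC hp hx hβ₀ hβ₁) hL)
    _ = L * (1 - α * β * (1 - L)) * ‖x - p‖ := by ring

end SIteration

theorem s_iteration_contraction_rate_general
    {E : Type*} [NormedAddCommGroup E] [NormedSpace ℝ E]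
    (C : Set E) (hCcv : Convex ℝ C)
    (T : E → E) (hTmaps : Set.MapsTo T C C)
    (L : ℝ) (hL0 : 0 < L) (hL1 : L < 1)
    (hT : ∀ x ∈ C, ∀ y ∈ C, ‖T x - T y‖ ≤ L * ‖x - y‖)
    (p : E) (hpC : p ∈ C) (hp : T p = p)
    (lam : ℝ) (hlam : 0 < lam)
    (α β : ℕ → ℝ)
    (hα : ∀ n, lam ≤ α n ∧ α n < 1) (hβ : ∀ n, lam ≤ β n ∧ β n < 1)
    (a b : ℕ → E) (ha0 : a 0 ∈ C)
    (hb : ∀ n, b n = (1 - β n) • a n + β n • T (a n))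
    (ha : ∀ n, a (n + 1) = (1 - α n) • T (a n) + α n • T (b n)) :
    (∀ n, ‖a (n + 1) - p‖ ≤ L * (1 - lam ^ 2 * (1 - L)) * ‖a n - p‖) ∧
    (∀ n, ‖a n - p‖ ≤ (L * (1 - lam ^ 2 * (1 - L))) ^ n * ‖a 0 - p‖) := by
  have hα₀ n : 0 ≤ α n := hlam.le.trans (hα n).1
  have hβ₀ n : 0 ≤ β n := hlam.le.trans (hβ n).1
  have ha_eq n : a (n + 1) = sStep T (α n) (β n) (a n) := by rw [ha n, hb n, sStep]
  have haC n : a n ∈ C := by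
    induction n with
    | zero => exact ha0
    | succ n ih =>
      exact ha_eq n ▸ sStep_mem hCcv hTmaps ih (hα₀ n) (hα n).2.le (hβ₀ n) (hβ n).2.le
  have hstep n : ‖a (n + 1) - p‖ ≤ L * (1 - lam ^ 2 * (1 - L)) * ‖a n - p‖ := by
    have hlam_sq : lam ^ 2 ≤ α n * β n := by
      rw [sq]; exact mul_le_mul (hα n).1 (hβ n).1 hlam.le (hα₀ n)
    rw [ha_eq n]
    refine (norm_sStep_sub_le hCcv hTmaps hL0.le hT hpC hp (haC n) (hα₀ n) (hα n).2.le
      (hβ₀ n) (hβ n).2.le).trans ?_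
    have := sub_nonneg.2 hL1.le
    gcongr
  have hrate : 0 ≤ L * (1 - lam ^ 2 * (1 - L)) := by
    have hlam1 : lam ≤ 1 := (hα 0).1.trans (hα 0).2.le
    have : lam ^ 2 * (1 - L) ≤ 1 :=
      mul_le_one₀ (pow_le_one₀ hlam.le hlam1) (sub_nonneg.2 hL1.le) (by linarith)
    exact mul_nonneg hL0.le (sub_nonneg.2 this)
  exact ⟨hstep, le_pow_mul_of_le_mul hrate hstep⟩

theorem s_iteration_contraction_rate
    {E : Type*} [NormedAddCommGroup E] [NormedSpace ℝ E]
    (C : Set E) (hCne : C.Nonempty) (hCcl : IsClosed C) (hCcv : Convex ℝ C)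
    (T : E → E) (hTmaps : Set.MapsTo T C C)
    (L : ℝ) (hL0 : 0 < L) (hL1 : L < 1)
    (hT : ∀ x ∈ C, ∀ y ∈ C, ‖T x - T y‖ ≤ L * ‖x - y‖)
    (p : E) (hpC : p ∈ C) (hp : T p = p)
    (lam : ℝ) (hlam : 0 < lam)
    (α β : ℕ → ℝ)
    (hα : ∀ n, lam ≤ α n ∧ α n < 1) (hβ : ∀ n, lam ≤ β n ∧ β n < 1)
    (a b : ℕ → E) (ha0 : a 0 ∈ C)
    (hb : ∀ n, b n = (1 - β n) • a n + β n • T (a n))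
    (ha : ∀ n, a (n + 1) = (1 - α n) • T (a n) + α n • T (b n)) :
    (∀ n, ‖a (n + 1) - p‖ ≤ L * (1 - lam ^ 2 * (1 - L)) * ‖a n - p‖) ∧
    (∀ n, ‖a n - p‖ ≤ (L * (1 - lam ^ 2 * (1 - L))) ^ n * ‖a 0 - p‖) :=
  s_iteration_contraction_rate_general C hCcv T hTmaps L hL0 hL1 hT p hpC hp lam hlam α β hα hβ a b
    ha0 hb ha
end

section
/- For a contraction T with constant L ∈ (0,1) and the normal S-iteration t_{n+1} = T((1-α_n) t_n + α_n T t_n) with α_n ≥ λ > 0, one has ‖t_{n+1} - p‖ ≤ L(1 - (1-L)λ) ‖t_n - p‖ for each fixed point p, and hence ‖t_n - p‖ ≤ [L(1 - (1-L)λ)]^{n-1} ‖t_1 - p‖. -/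
/-!
Since `T p = p`, the Lipschitz bound reads `‖T x - p‖ ≤ L ‖x - p‖` on `C`. The inner convex
combination `(1 - a) x + a T x` is then closer to `p` than `x` by the factor `1 - (1 - L) a`,
and the outer application of `T` contributes another factor `L`. This factor decreases in `a`,
so `a ≥ λ` gives the uniform rate `L (1 - (1 - L) λ)`, and iterating yields the geometric bound.
-/

section NormalSIteration

variable {E : Type*} [SeminormedAddCommGroup E]

lemma norm_sub_fixedPoint_le_of_lipschitzOn {C : Set E} {T : E → E} {L : ℝ}
    (hT : ∀ x ∈ C, ∀ y ∈ C, ‖T x - T y‖ ≤ L * ‖x - y‖) {p : E} (hpC : p ∈ C) (hp : T p = p)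
    {x : E} (hx : x ∈ C) : ‖T x - p‖ ≤ L * ‖x - p‖ := by
  simpa only [hp] using hT x hx p hpC

variable [NormedSpace ℝ E]

lemma norm_convexCombination_sub_le {x y p : E} {a L : ℝ} (ha0 : 0 ≤ a) (ha1 : a ≤ 1)
    (hy : ‖y - p‖ ≤ L * ‖x - p‖) :
    ‖(1 - a) • x + a • y - p‖ ≤ (1 - (1 - L) * a) * ‖x - p‖ := by
  have hsplit : (1 - a) • x + a • y - p = (1 - a) • (x - p) + a • (y - p) := by
    simp only [smul_sub, sub_smul, one_smul]; abel
  calc ‖(1 - a) • x + a • y - p‖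
      ≤ (1 - a) * ‖x - p‖ + a * ‖y - p‖ := by
        rw [hsplit]
        refine (norm_add_le _ _).trans_eq ?_
        rw [norm_smul_of_nonneg (sub_nonneg.2 ha1), norm_smul_of_nonneg ha0]
    _ ≤ (1 - a) * ‖x - p‖ + a * (L * ‖x - p‖) := by gcongr
    _ = (1 - (1 - L) * a) * ‖x - p‖ := by ring

lemma norm_normalSStep_sub_le {C : Set E} (hC : Convex ℝ C) {T : E → E}
    (hTC : Set.MapsTo T C C) {L : ℝ} (hL : 0 ≤ L)
    (hT : ∀ x ∈ C, ∀ y ∈ C, ‖T x - T y‖ ≤ L * ‖x - y‖) {p : E} (hpC : p ∈ C) (hp : T p = p)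
    {x : E} (hx : x ∈ C) {a : ℝ} (ha0 : 0 ≤ a) (ha1 : a ≤ 1) :
    ‖T ((1 - a) • x + a • T x) - p‖ ≤ L * (1 - (1 - L) * a) * ‖x - p‖ := by
  have hyC : (1 - a) • x + a • T x ∈ C :=
    hC hx (hTC hx) (sub_nonneg.2 ha1) ha0 (sub_add_cancel 1 a)
  calc ‖T ((1 - a) • x + a • T x) - p‖
      ≤ L * ‖(1 - a) • x + a • T x - p‖ :=
        norm_sub_fixedPoint_le_of_lipschitzOn hT hpC hp hyC
    _ ≤ L * ((1 - (1 - L) * a) * ‖x - p‖) := by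
        gcongr
        exact norm_convexCombination_sub_le ha0 ha1
          (norm_sub_fixedPoint_le_of_lipschitzOn hT hpC hp hx)
    _ = L * (1 - (1 - L) * a) * ‖x - p‖ := by ring

lemma normalSIteration_mem {C : Set E} (hC : Convex ℝ C) {T : E → E}
    (hTC : Set.MapsTo T C C) {α : ℕ → ℝ} (hα0 : ∀ n, 0 ≤ α n) (hα1 : ∀ n, α n ≤ 1)
    {t : ℕ → E} (ht0 : t 0 ∈ C) (ht : ∀ n, t (n + 1) = T ((1 - α n) • t n + α n • T (t n)))
    (n : ℕ) : t n ∈ C := by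
  induction n with
  | zero => exact ht0
  | succ n ih =>
    rw [ht n]
    exact hTC (hC ih (hTC ih) (sub_nonneg.2 (hα1 n)) (hα0 n) (sub_add_cancel 1 (α n)))

end NormalSIteration

theorem normal_s_iteration_contraction_rate_general
    {E : Type*} [NormedAddCommGroup E] [NormedSpace ℝ E]
    (C : Set E) (hCcv : Convex ℝ C)
    (T : E → E) (hTmaps : Set.MapsTo T C C)
    (L : ℝ) (hL0 : 0 < L) (hL1 : L < 1)
    (hT : ∀ x ∈ C, ∀ y ∈ C, ‖T x - T y‖ ≤ L * ‖x - y‖)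
    (p : E) (hpC : p ∈ C) (hp : T p = p)
    (lam : ℝ) (hlam : 0 < lam)
    (α : ℕ → ℝ) (hα : ∀ n, lam ≤ α n ∧ α n < 1)
    (t : ℕ → E) (ht0 : t 0 ∈ C)
    (ht : ∀ n, t (n + 1) = T ((1 - α n) • t n + α n • T (t n))) :
    (∀ n, ‖t (n + 1) - p‖ ≤ L * (1 - (1 - L) * lam) * ‖t n - p‖) ∧
    (∀ n, ‖t n - p‖ ≤ (L * (1 - (1 - L) * lam)) ^ n * ‖t 0 - p‖) := by
  have hα0 : ∀ n, 0 ≤ α n := fun n => hlam.le.trans (hα n).1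
  have hα1 : ∀ n, α n ≤ 1 := fun n => (hα n).2.le
  have hstep : ∀ n, ‖t (n + 1) - p‖ ≤ L * (1 - (1 - L) * lam) * ‖t n - p‖ := by
    intro n
    rw [ht n]
    refine (norm_normalSStep_sub_le hCcv hTmaps hL0.le hT hpC hp
      (normalSIteration_mem hCcv hTmaps hα0 hα1 ht0 ht n) (hα0 n) (hα1 n)).trans ?_
    have hrate : 1 - (1 - L) * α n ≤ 1 - (1 - L) * lam := by
      nlinarith [(hα n).1]
    gcongr
  have hrate_nonneg : 0 ≤ L * (1 - (1 - L) * lam) :=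
    mul_nonneg hL0.le (by nlinarith [mul_pos hL0 hlam, (hα 0).1, hα1 0])
  exact ⟨hstep, fun n => le_geom (u := fun n => ‖t n - p‖) hrate_nonneg n fun k _ => hstep k⟩

theorem normal_s_iteration_contraction_rate
    {E : Type*} [NormedAddCommGroup E] [NormedSpace ℝ E]
    (C : Set E) (hCne : C.Nonempty) (hCcl : IsClosed C) (hCcv : Convex ℝ C)
    (T : E → E) (hTmaps : Set.MapsTo T C C)
    (L : ℝ) (hL0 : 0 < L) (hL1 : L < 1)
    (hT : ∀ x ∈ C, ∀ y ∈ C, ‖T x - T y‖ ≤ L * ‖x - y‖)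
    (p : E) (hpC : p ∈ C) (hp : T p = p)
    (lam : ℝ) (hlam : 0 < lam)
    (α : ℕ → ℝ) (hα : ∀ n, lam ≤ α n ∧ α n < 1)
    (t : ℕ → E) (ht0 : t 0 ∈ C)
    (ht : ∀ n, t (n + 1) = T ((1 - α n) • t n + α n • T (t n))) :
    (∀ n, ‖t (n + 1) - p‖ ≤ L * (1 - (1 - L) * lam) * ‖t n - p‖) ∧
    (∀ n, ‖t n - p‖ ≤ (L * (1 - (1 - L) * lam)) ^ n * ‖t 0 - p‖) :=
  normal_s_iteration_contraction_rate_general C hCcv T hTmaps L hL0 hL1 hT p hpC hp lam hlam α hα t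
    ht0 ht
end

section
/- For a contraction T with constant L ∈ (0,1) and the three-step iteration x_{n+1} = T y_n, y_n = (1-α_n) z_n + α_n T z_n, z_n = (1-β_n) x_n + β_n T x_n with α_n, β_n ≥ λ > 0, one has ‖x_{n+1} - p‖ ≤ L(1 - (1-L)λ)² ‖x_n - p‖ for each fixed point p, and hence ‖x_n - p‖ ≤ [L(1 - (1-L)λ)²]^{n-1} ‖x_1 - p‖. -/
/-! Since `T p = p`, each averaging step `u ↦ (1 - t) • u + t • T u` with `λ ≤ t ≤ 1` shrinks the
distance to `p` by the factor `1 - (1 - L) t ≤ 1 - (1 - L) λ`, and the final application of `T`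
by `L`; convexity keeps all iterates in `C`, where the contraction estimate applies. -/

section AveragedStep

variable {E : Type*} [NormedAddCommGroup E] [NormedSpace ℝ E]

theorem norm_averaged_sub_le {T : E → E} {p u : E} {L t : ℝ}
    (hu : ‖T u - p‖ ≤ L * ‖u - p‖) (ht₀ : 0 ≤ t) (ht₁ : t ≤ 1) :
    ‖(1 - t) • u + t • T u - p‖ ≤ (1 - (1 - L) * t) * ‖u - p‖ := by
  have hsplit : (1 - t) • u + t • T u - p = (1 - t) • (u - p) + t • (T u - p) := by module
  calc ‖(1 - t) • u + t • T u - p‖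
      = ‖(1 - t) • (u - p) + t • (T u - p)‖ := by rw [hsplit]
    _ ≤ (1 - t) * ‖u - p‖ + t * ‖T u - p‖ := by
        refine (norm_add_le _ _).trans_eq ?_
        rw [norm_smul_of_nonneg (by linarith), norm_smul_of_nonneg ht₀]
    _ ≤ (1 - t) * ‖u - p‖ + t * (L * ‖u - p‖) := by gcongr
    _ = (1 - (1 - L) * t) * ‖u - p‖ := by ring

theorem norm_averaged_sub_le_of_le {T : E → E} {p u : E} {L t lam : ℝ}
    (hu : ‖T u - p‖ ≤ L * ‖u - p‖) (hL : L ≤ 1) (hlam : 0 ≤ lam) (hlt : lam ≤ t)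
    (ht₁ : t ≤ 1) :
    ‖(1 - t) • u + t • T u - p‖ ≤ (1 - (1 - L) * lam) * ‖u - p‖ :=
  (norm_averaged_sub_le hu (hlam.trans hlt) ht₁).trans <|
    mul_le_mul_of_nonneg_right (by nlinarith) (norm_nonneg _)

end AveragedStep

theorem three_step_iteration_contraction_rate_general
    {E : Type*} [NormedAddCommGroup E] [NormedSpace ℝ E]
    (C : Set E) (hCcv : Convex ℝ C)
    (T : E → E) (hTmaps : Set.MapsTo T C C)
    (L : ℝ) (hL0 : 0 < L) (hL1 : L < 1)
    (hT : ∀ x ∈ C, ∀ y ∈ C, ‖T x - T y‖ ≤ L * ‖x - y‖)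
    (p : E) (hpC : p ∈ C) (hp : T p = p)
    (lam : ℝ) (hlam : 0 < lam)
    (α β : ℕ → ℝ)
    (hα : ∀ n, lam ≤ α n ∧ α n < 1) (hβ : ∀ n, lam ≤ β n ∧ β n < 1)
    (x y z : ℕ → E) (hx0 : x 0 ∈ C)
    (hz : ∀ n, z n = (1 - β n) • x n + β n • T (x n))
    (hy : ∀ n, y n = (1 - α n) • z n + α n • T (z n))
    (hx : ∀ n, x (n + 1) = T (y n)) :
    (∀ n, ‖x (n + 1) - p‖ ≤ L * (1 - (1 - L) * lam) ^ 2 * ‖x n - p‖) ∧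
    (∀ n, ‖x n - p‖ ≤ (L * (1 - (1 - L) * lam) ^ 2) ^ n * ‖x 0 - p‖) := by
  set q := 1 - (1 - L) * lam
  have hTp : ∀ u ∈ C, ‖T u - p‖ ≤ L * ‖u - p‖ := fun u hu => by
    simpa only [hp] using hT u hu p hpC
  have hstep_mem : ∀ u ∈ C, ∀ t, lam ≤ t → t < 1 → (1 - t) • u + t • T u ∈ C :=
    fun u hu t hlt ht₁ => hCcv hu (hTmaps hu) (by linarith) (by linarith) (by ring)
  have hstep_norm : ∀ u ∈ C, ∀ t, lam ≤ t → t < 1 → ‖(1 - t) • u + t • T u - p‖ ≤ q * ‖u - p‖ :=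
    fun u hu t hlt ht₁ => norm_averaged_sub_le_of_le (hTp u hu) hL1.le hlam.le hlt ht₁.le
  have hzC : ∀ n, x n ∈ C → z n ∈ C := fun n hxn =>
    hz n ▸ hstep_mem _ hxn _ (hβ n).1 (hβ n).2
  have hyC : ∀ n, x n ∈ C → y n ∈ C := fun n hxn =>
    hy n ▸ hstep_mem _ (hzC n hxn) _ (hα n).1 (hα n).2
  have hxC : ∀ n, x n ∈ C := Nat.rec hx0 fun n ih => hx n ▸ hTmaps (hyC n ih)
  have hq : 0 ≤ q := by nlinarith [(hα 0).1, (hα 0).2]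
  have hone : ∀ n, ‖x (n + 1) - p‖ ≤ L * q ^ 2 * ‖x n - p‖ := fun n => calc
    ‖x (n + 1) - p‖ ≤ L * ‖y n - p‖ := hx n ▸ hTp _ (hyC n (hxC n))
    _ ≤ L * (q * ‖z n - p‖) := by
        gcongr; exact hy n ▸ hstep_norm _ (hzC n (hxC n)) _ (hα n).1 (hα n).2
    _ ≤ L * (q * (q * ‖x n - p‖)) := by
        gcongr; exact hz n ▸ hstep_norm _ (hxC n) _ (hβ n).1 (hβ n).2
    _ = L * q ^ 2 * ‖x n - p‖ := by ring
  exact ⟨hone, fun n => le_geom (u := fun n => ‖x n - p‖) (by positivity) n fun k _ => hone k⟩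

theorem three_step_iteration_contraction_rate
    {E : Type*} [NormedAddCommGroup E] [NormedSpace ℝ E]
    (C : Set E) (hCne : C.Nonempty) (hCcl : IsClosed C) (hCcv : Convex ℝ C)
    (T : E → E) (hTmaps : Set.MapsTo T C C)
    (L : ℝ) (hL0 : 0 < L) (hL1 : L < 1)
    (hT : ∀ x ∈ C, ∀ y ∈ C, ‖T x - T y‖ ≤ L * ‖x - y‖)
    (p : E) (hpC : p ∈ C) (hp : T p = p)
    (lam : ℝ) (hlam : 0 < lam)
    (α β : ℕ → ℝ)
    (hα : ∀ n, lam ≤ α n ∧ α n < 1) (hβ : ∀ n, lam ≤ β n ∧ β n < 1)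
    (x y z : ℕ → E) (hx0 : x 0 ∈ C)
    (hz : ∀ n, z n = (1 - β n) • x n + β n • T (x n))
    (hy : ∀ n, y n = (1 - α n) • z n + α n • T (z n))
    (hx : ∀ n, x (n + 1) = T (y n)) :
    (∀ n, ‖x (n + 1) - p‖ ≤ L * (1 - (1 - L) * lam) ^ 2 * ‖x n - p‖) ∧
    (∀ n, ‖x n - p‖ ≤ (L * (1 - (1 - L) * lam) ^ 2) ^ n * ‖x 0 - p‖) :=
  three_step_iteration_contraction_rate_general C hCcv T hTmaps L hL0 hL1 hT p hpC hp lam hlam α β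
    hα hβ x y z hx0 hz hy hx
end

section
/- Let 0 < L < 1 and 0 < λ < 1. Then the ratio [(1 - (1-L)λ)²/(1 - (1-L)λ²)]^n tends to 0 as n → ∞; consequently the sequence m_n = [L(1-(1-L)λ)²]^n c₁ converges to 0 faster (in the sense of Berinde, i.e., m_n/k_n → 0) than k_n = [L(1-(1-L)λ²)]^n c₂, for any constants c₁, c₂ > 0. -/
/-! For `0 < a` and `0 < x`, expanding the square shows `(1 - a x)² < 1 - a x²` exactly when
`(1 + a) x < 2`, which holds for `a = 1 - L` and `x = λ` in `(0, 1)`. The ratio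
`(1 - a x)² / (1 - a x²)` is then in `[0, 1)`, so its powers tend to `0`, and after cancelling
`Lⁿ` the quotient `mₙ / kₙ` is these powers times the constant `c₁ / c₂`. -/

open Filter Topology

theorem sq_one_sub_mul_lt_one_sub_mul_sq {a x : ℝ} (ha : 0 < a) (hx : 0 < x)
    (hax : (1 + a) * x < 2) : (1 - a * x) ^ 2 < 1 - a * x ^ 2 := by
  have hgap : 0 < a * x * (2 - (1 + a) * x) := mul_pos (mul_pos ha hx) (by linarith)
  nlinarith

theorem tendsto_div_pow_atTop_nhds_zero {p q : ℝ} (hp : 0 ≤ p) (hpq : p < q) :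
    Tendsto (fun n : ℕ => (p / q) ^ n) atTop (𝓝 0) :=
  have hq : 0 < q := hp.trans_lt hpq
  tendsto_pow_atTop_nhds_zero_of_lt_one (div_nonneg hp hq.le) ((div_lt_one hq).2 hpq)

theorem mul_pow_mul_div_mul_pow_mul {K : Type*} [Field K] {L : K} (hL : L ≠ 0)
    (p q c₁ c₂ : K) (n : ℕ) :
    (L * p) ^ n * c₁ / ((L * q) ^ n * c₂) = (p / q) ^ n * (c₁ / c₂) := by
  rw [mul_pow, mul_pow, div_pow, mul_assoc, mul_assoc, mul_div_mul_left _ _ (pow_ne_zero n hL),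
    div_mul_div_comm]

theorem tendsto_mul_pow_div_mul_pow_atTop_nhds_zero {L p q : ℝ} (hL : L ≠ 0) (hp : 0 ≤ p)
    (hpq : p < q) (c₁ c₂ : ℝ) :
    Tendsto (fun n : ℕ => (L * p) ^ n * c₁ / ((L * q) ^ n * c₂)) atTop (𝓝 0) := by
  simpa only [mul_pow_mul_div_mul_pow_mul hL, zero_mul] using
    (tendsto_div_pow_atTop_nhds_zero hp hpq).mul_const (c₁ / c₂)

theorem faster_than_s_iteration
    (L lam : ℝ) (hL0 : 0 < L) (hL1 : L < 1) (hlam0 : 0 < lam) (hlam1 : lam < 1) :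
    Tendsto (fun n : ℕ => ((1 - (1 - L) * lam) ^ 2 / (1 - (1 - L) * lam ^ 2)) ^ n)
      atTop (nhds 0) ∧
    ∀ c₁ c₂ : ℝ, 0 < c₁ → 0 < c₂ →
      Tendsto (fun n : ℕ =>
        ((L * (1 - (1 - L) * lam) ^ 2) ^ n * c₁) / ((L * (1 - (1 - L) * lam ^ 2)) ^ n * c₂))
        atTop (nhds 0) := by
  have hratio : (1 - (1 - L) * lam) ^ 2 < 1 - (1 - L) * lam ^ 2 :=
    sq_one_sub_mul_lt_one_sub_mul_sq (sub_pos.2 hL1) hlam0 (by nlinarith)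
  exact ⟨tendsto_div_pow_atTop_nhds_zero (sq_nonneg _) hratio, fun c₁ c₂ _ _ =>
    tendsto_mul_pow_div_mul_pow_atTop_nhds_zero hL0.ne' (sq_nonneg _) hratio c₁ c₂⟩
end

section
/- Let E be a uniformly convex Banach space, C ⊆ E nonempty closed convex, T : C → C nonexpansive with a fixed point p, and let x_n be defined by x_{n+1} = T y_n, y_n = (1-α_n) z_n + α_n T z_n, z_n = (1-β_n) x_n + β_n T x_n, where α_n, β_n are bounded away from 0 and 1. Then lim_{n→∞} ‖x_n - T x_n‖ = 0. -/
/-!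
Along the Ishikawa iteration the distances `‖x n - p‖` to the fixed point never increase, so
they converge. Whenever `‖x n - T (x n)‖ ≥ ε`, the vectors `x n - p` and `T (x n) - p` lie in the
ball of radius `‖x n - p‖` and are `ε` apart, so by uniform convexity the inner Mann step
`z n` is closer to `p` than `x n` by a fixed amount `κ(ε) > 0`. A convergent sequence can only
drop by `κ` finitely often, hence `‖x n - T (x n)‖ < ε` eventually.
-/

open Filter Set Topology

theorem tendsto_nhds_zero_of_antitone_of_drop {r g : ℕ → ℝ} (hr : Antitone r)
    (hbdd : BddBelow (range r)) (hg : ∀ n, 0 ≤ g n)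
    (hdrop : ∀ ε > 0, ∃ κ > 0, ∀ n, ε ≤ g n → r (n + 1) ≤ r n - κ) :
    Tendsto g atTop (𝓝 0) := by
  have hlim := tendsto_atTop_ciInf hr hbdd
  have hdiff : Tendsto (fun n => r n - r (n + 1)) atTop (𝓝 0) := by
    simpa using hlim.sub (hlim.comp (tendsto_add_atTop_nat 1))
  refine tendsto_order.2 ⟨fun a ha => .of_forall fun n => ha.trans_le (hg n), fun ε hε => ?_⟩
  obtain ⟨κ, hκ, hstep⟩ := hdrop ε hε
  filter_upwards [hdiff.eventually (gt_mem_nhds hκ)] with n hn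
  by_contra! h
  linarith [hstep n h]

section Normed

variable {E : Type*} [SeminormedAddCommGroup E] [NormedSpace ℝ E]

theorem norm_smul_add_smul_le_sub_of_le_half {u v : E} {r δ c t : ℝ} (hu : ‖u‖ ≤ r)
    (huv : ‖u + v‖ ≤ 2 * r - δ) (hδ : 0 ≤ δ) (hc : 0 ≤ c) (hct : c ≤ t) (ht : t ≤ 1 / 2) :
    ‖(1 - t) • u + t • v‖ ≤ r - c * δ :=
  calc ‖(1 - t) • u + t • v‖ = ‖(1 - 2 * t) • u + t • (u + v)‖ := by congr 1; module
    _ ≤ (1 - 2 * t) * ‖u‖ + t * ‖u + v‖ := by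
      refine (norm_add_le _ _).trans_eq ?_
      rw [norm_smul_of_nonneg (by linarith), norm_smul_of_nonneg (by linarith)]
    _ ≤ (1 - 2 * t) * r + t * (2 * r - δ) := by gcongr <;> linarith
    _ ≤ r - c * δ := by nlinarith

theorem norm_smul_add_smul_le_sub {u v : E} {r δ c t : ℝ} (hu : ‖u‖ ≤ r) (hv : ‖v‖ ≤ r)
    (huv : ‖u + v‖ ≤ 2 * r - δ) (hδ : 0 ≤ δ) (hc : 0 ≤ c) (hct : c ≤ t) (htc : t ≤ 1 - c) :
    ‖(1 - t) • u + t • v‖ ≤ r - c * δ := by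
  rcases le_total t (1 / 2) with ht | ht
  · exact norm_smul_add_smul_le_sub_of_le_half hu huv hδ hc hct ht
  · have hswap : (1 - t) • u + t • v = (1 - (1 - t)) • v + (1 - t) • u := by module
    rw [hswap]
    exact norm_smul_add_smul_le_sub_of_le_half hv (by rwa [add_comm]) hδ hc (by linarith)
      (by linarith)

variable (E) [UniformConvexSpace E]

theorem exists_forall_closed_ball_dist_add_le_two_mul_sub_of_le {ε : ℝ} (hε : 0 < ε) (R : ℝ) :
    ∃ δ, 0 < δ ∧ ∀ ⦃r⦄, r ≤ R → ∀ ⦃x : E⦄, ‖x‖ ≤ r → ∀ ⦃y⦄, ‖y‖ ≤ r → ε ≤ ‖x - y‖ →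
      ‖x + y‖ ≤ 2 * r - δ := by
  have hR : 0 < max R 1 := lt_max_of_lt_right one_pos
  obtain ⟨δ, hδ, h⟩ := exists_forall_closed_ball_dist_add_le_two_sub E (div_pos hε hR)
  refine ⟨ε * δ / 2, by positivity, fun r hrR x hx y hy hxy => ?_⟩
  -- `ε ≤ ‖x - y‖ ≤ 2 r` bounds `r` from below, which makes the loss `r δ` uniform.
  have hεr : ε ≤ 2 * r := by linarith [norm_sub_le x y]
  have hr : 0 < r := by linarith
  have hscale : ∀ z : E, ‖r⁻¹ • z‖ = r⁻¹ * ‖z‖ := fun z => norm_smul_of_nonneg (by positivity) z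
  have hx' : ‖r⁻¹ • x‖ ≤ 1 := by rw [hscale, inv_mul_le_one₀ hr]; exact hx
  have hy' : ‖r⁻¹ • y‖ ≤ 1 := by rw [hscale, inv_mul_le_one₀ hr]; exact hy
  have hxy' : ε / max R 1 ≤ ‖r⁻¹ • x - r⁻¹ • y‖ := by
    rw [← smul_sub, hscale, inv_mul_eq_div]
    exact (div_le_div_of_nonneg_left hε.le hr (hrR.trans (le_max_left R 1))).trans
      (div_le_div_of_nonneg_right hxy hr.le)
  have hsum := h hx' hy' hxy'
  rw [← smul_add, hscale, inv_mul_le_iff₀ hr] at hsum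
  nlinarith

end Normed

section Iteration

variable {E : Type*} [NormedAddCommGroup E] [NormedSpace ℝ E]

def mannStep (T : E → E) (t : ℝ) (w : E) : E := (1 - t) • w + t • T w

def ishikawaStep (T : E → E) (s t : ℝ) (w : E) : E := T (mannStep T s (mannStep T t w))

variable {C : Set E} {T : E → E} {p w : E} {s t : ℝ}

theorem mannStep_mem (hC : Convex ℝ C) (hTC : MapsTo T C C) (hw : w ∈ C) (ht : t ∈ Icc 0 1) :
    mannStep T t w ∈ C :=
  hC hw (hTC hw) (by linarith [ht.2]) ht.1 (by ring)

theorem ishikawaStep_mem (hC : Convex ℝ C) (hTC : MapsTo T C C) (hw : w ∈ C)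
    (hs : s ∈ Icc 0 1) (ht : t ∈ Icc 0 1) : ishikawaStep T s t w ∈ C :=
  hTC (mannStep_mem hC hTC (mannStep_mem hC hTC hw ht) hs)

variable (hTp : ∀ w ∈ C, ‖T w - p‖ ≤ ‖w - p‖)
include hTp

theorem norm_mannStep_sub_le (hw : w ∈ C) (ht : t ∈ Icc 0 1) :
    ‖mannStep T t w - p‖ ≤ ‖w - p‖ := by
  have hball : mannStep T t w ∈ Metric.closedBall p ‖w - p‖ :=
    convex_closedBall p _ (Metric.mem_closedBall.2 (dist_eq_norm w p).le)
      (Metric.mem_closedBall.2 ((dist_eq_norm _ _).trans_le (hTp w hw)))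
      (by linarith [ht.2]) ht.1 (by ring)
  rwa [Metric.mem_closedBall, dist_eq_norm] at hball

theorem norm_ishikawaStep_sub_le (hC : Convex ℝ C) (hTC : MapsTo T C C) (hw : w ∈ C)
    (hs : s ∈ Icc 0 1) (ht : t ∈ Icc 0 1) :
    ‖ishikawaStep T s t w - p‖ ≤ ‖mannStep T t w - p‖ := by
  have hz := mannStep_mem hC hTC hw ht
  exact (hTp _ (mannStep_mem hC hTC hz hs)).trans (norm_mannStep_sub_le hTp hz hs)

theorem exists_norm_mannStep_sub_le_sub [UniformConvexSpace E] {ε c : ℝ} (hε : 0 < ε)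
    (hc : 0 < c) (R : ℝ) :
    ∃ κ > 0, ∀ w ∈ C, ‖w - p‖ ≤ R → ε ≤ ‖w - T w‖ → ∀ t, c ≤ t → t ≤ 1 - c →
      ‖mannStep T t w - p‖ ≤ ‖w - p‖ - κ := by
  obtain ⟨δ, hδ, h⟩ := exists_forall_closed_ball_dist_add_le_two_mul_sub_of_le E hε R
  refine ⟨c * δ, by positivity, fun w hw hwR hεw t hct htc => ?_⟩
  have huv : ‖(w - p) + (T w - p)‖ ≤ 2 * ‖w - p‖ - δ :=
    h hwR le_rfl (hTp w hw) (by rwa [sub_sub_sub_cancel_right])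
  have hdecomp : mannStep T t w - p = (1 - t) • (w - p) + t • (T w - p) := by
    unfold mannStep; module
  rw [hdecomp]
  exact norm_smul_add_smul_le_sub le_rfl (hTp w hw) huv hδ.le hc.le hct htc

end Iteration

theorem iteration_asymptotic_regularity_general
    {E : Type*} [NormedAddCommGroup E] [NormedSpace ℝ E]
    [UniformConvexSpace E]
    (C : Set E) (hCcv : Convex ℝ C)
    (T : E → E) (hTmaps : Set.MapsTo T C C)
    (hT : ∀ x ∈ C, ∀ y ∈ C, ‖T x - T y‖ ≤ ‖x - y‖)
    (p : E) (hpC : p ∈ C) (hp : T p = p)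
    (a b : ℝ) (ha : 0 < a) (hb : b < 1)
    (α β : ℕ → ℝ)
    (hα : ∀ n, a ≤ α n ∧ α n ≤ b) (hβ : ∀ n, a ≤ β n ∧ β n ≤ b)
    (x y z : ℕ → E) (hx0 : x 0 ∈ C)
    (hz : ∀ n, z n = (1 - β n) • x n + β n • T (x n))
    (hy : ∀ n, y n = (1 - α n) • z n + α n • T (z n))
    (hx : ∀ n, x (n + 1) = T (y n)) :
    Tendsto (fun n => ‖x n - T (x n)‖) atTop (nhds 0) := by
  have hTp : ∀ w ∈ C, ‖T w - p‖ ≤ ‖w - p‖ := fun w hw => by simpa [hp] using hT w hw p hpC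
  have hα01 : ∀ n, α n ∈ Icc 0 1 := fun n => ⟨by linarith [hα n], by linarith [hα n]⟩
  have hβ01 : ∀ n, β n ∈ Icc 0 1 := fun n => ⟨by linarith [hβ n], by linarith [hβ n]⟩
  have hstep : ∀ n, x (n + 1) = ishikawaStep T (α n) (β n) (x n) := fun n => by
    rw [hx, hy, hz]; rfl
  have hxC : ∀ n, x n ∈ C := fun n => by
    induction n with
    | zero => exact hx0
    | succ n ih => exact hstep n ▸ ishikawaStep_mem hCcv hTmaps ih (hα01 n) (hβ01 n)
  have hdist : ∀ n, ‖x (n + 1) - p‖ ≤ ‖mannStep T (β n) (x n) - p‖ := fun n =>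
    hstep n ▸ norm_ishikawaStep_sub_le hTp hCcv hTmaps (hxC n) (hα01 n) (hβ01 n)
  have hanti : Antitone fun n => ‖x n - p‖ := antitone_nat_of_succ_le fun n =>
    (hdist n).trans (norm_mannStep_sub_le hTp (hxC n) (hβ01 n))
  refine tendsto_nhds_zero_of_antitone_of_drop hanti ⟨0, by rintro _ ⟨n, rfl⟩; positivity⟩
    (fun n => norm_nonneg _) fun ε hε => ?_
  obtain ⟨κ, hκ, hdrop⟩ := exists_norm_mannStep_sub_le_sub hTp hε
    (lt_min ha (sub_pos.2 hb)) ‖x 0 - p‖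
  refine ⟨κ, hκ, fun n hn => (hdist n).trans ?_⟩
  exact hdrop _ (hxC n) (hanti (Nat.zero_le n)) hn _ ((min_le_left _ _).trans (hβ n).1)
    ((hβ n).2.trans (by linarith [min_le_right a (1 - b)]))

theorem iteration_asymptotic_regularity
    {E : Type*} [NormedAddCommGroup E] [NormedSpace ℝ E]
    [UniformConvexSpace E] [CompleteSpace E]
    (C : Set E) (hCne : C.Nonempty) (hCcl : IsClosed C) (hCcv : Convex ℝ C)
    (T : E → E) (hTmaps : Set.MapsTo T C C)
    (hT : ∀ x ∈ C, ∀ y ∈ C, ‖T x - T y‖ ≤ ‖x - y‖)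
    (p : E) (hpC : p ∈ C) (hp : T p = p)
    (a b : ℝ) (ha : 0 < a) (hb : b < 1)
    (α β : ℕ → ℝ)
    (hα : ∀ n, a ≤ α n ∧ α n ≤ b) (hβ : ∀ n, a ≤ β n ∧ β n ≤ b)
    (x y z : ℕ → E) (hx0 : x 0 ∈ C)
    (hz : ∀ n, z n = (1 - β n) • x n + β n • T (x n))
    (hy : ∀ n, y n = (1 - α n) • z n + α n • T (z n))
    (hx : ∀ n, x (n + 1) = T (y n)) :
    Tendsto (fun n => ‖x n - T (x n)‖) atTop (nhds 0) :=
  iteration_asymptotic_regularity_general C hCcv T hTmaps hT p hpC hp a b ha hb α β hα hβ x y z hx0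
    hz hy hx
end

section
/- Let E be a uniformly convex Banach space and C a nonempty closed convex subset, T : C → C nonexpansive. Then I - T is demiclosed at zero: if x_n ∈ C converges weakly to x and x_n - T x_n converges strongly to 0, then x ∈ C and T x = x. -/
/-!
A closed convex set is weakly closed, so `l ∈ C`, and a weakly convergent sequence is bounded.
Uniform convexity is then used twice. Following Kakutani's proof of the Banach–Saks property,
for every `θ > 0` there is a depth `k` such that every tail of `x` has an iterated midpoint of
depth `k` within `θ` of `l`: a point still farther than `θ` from `l` is separated by a functional
from a later tail, so its midpoint with an iterated midpoint of that tail is closer to `l` by a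
fixed amount. On the other hand, the midpoint of two points with small displacement `‖y - T y‖`
again has small displacement, so iterated midpoints of bounded depth of points far out in the
sequence are approximate fixed points of `T` close to `l`; by nonexpansiveness, `T l = l`.
-/

open Filter Set Metric Topology

section Midpoints

variable {E : Type*} [AddCommGroup E] [Module ℝ E]

theorem midpoint_sub_eq_smul (a b c : E) :
    midpoint ℝ a b - c = (2⁻¹ : ℝ) • ((a - c) + (b - c)) := by
  rw [midpoint_eq_smul_add, invOf_eq_inv]; module

inductive DyadicMean (S : Set E) : ℕ → E → Prop
  | of_mem {y : E} : y ∈ S → DyadicMean S 0 y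
  | mid {k : ℕ} {a b : E} : DyadicMean S k a → DyadicMean S k b →
      DyadicMean S (k + 1) (midpoint ℝ a b)

namespace DyadicMean

variable {S S' : Set E} {k : ℕ} {m : E}

theorem mono (hSS' : S ⊆ S') (h : DyadicMean S k m) : DyadicMean S' k m := by
  induction h with
  | of_mem hy => exact of_mem (hSS' hy)
  | mid _ _ iha ihb => exact mid iha ihb

theorem mem_convexHull (h : DyadicMean S k m) : m ∈ convexHull ℝ S := by
  induction h with
  | of_mem hy => exact subset_convexHull ℝ S hy
  | mid _ _ iha ihb => exact (convex_convexHull ℝ S).midpoint_mem iha ihb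

end DyadicMean

end Midpoints

theorem exists_forall_norm_add_le_two_sub_mul {E : Type*} [SeminormedAddCommGroup E]
    [NormedSpace ℝ E] [UniformConvexSpace E] {ε : ℝ} (hε : 0 < ε) :
    ∃ δ, 0 < δ ∧ ∀ ρ : ℝ, ∀ ⦃x : E⦄, ‖x‖ ≤ ρ → ∀ ⦃y : E⦄, ‖y‖ ≤ ρ →
      ε * ρ ≤ ‖x - y‖ → ‖x + y‖ ≤ (2 - δ) * ρ := by
  obtain ⟨δ, hδ, h⟩ := exists_forall_closed_ball_dist_add_le_two_sub E hε
  refine ⟨δ, hδ, fun ρ x hx y hy hxy => ?_⟩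
  rcases le_or_gt ρ 0 with hρ | hρ
  · nlinarith [norm_add_le x y]
  have hscale : ∀ z : E, ‖ρ⁻¹ • z‖ = ‖z‖ / ρ := fun z => by
    rw [norm_smul_of_nonneg (inv_nonneg.2 hρ.le), inv_mul_eq_div]
  have key := h (x := ρ⁻¹ • x) (by rw [hscale, div_le_one hρ]; exact hx)
    (y := ρ⁻¹ • y) (by rw [hscale, div_le_one hρ]; exact hy)
    (by rw [← smul_sub, hscale, le_div_iff₀ hρ]; exact hxy)
  rwa [← smul_add, hscale, div_le_iff₀ hρ] at key

section Nonexpansive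

variable {E : Type*} [NormedAddCommGroup E] {C : Set E} {T : E → E}

theorem apply_eq_self_of_forall_exists_near
    (hT : ∀ x ∈ C, ∀ y ∈ C, ‖T x - T y‖ ≤ ‖x - y‖) {l : E} (hl : l ∈ C)
    (h : ∀ ζ > 0, ∃ m ∈ C, ‖m - l‖ ≤ ζ ∧ ‖m - T m‖ ≤ ζ) : T l = l := by
  refine eq_of_forall_dist_le fun ε hε => ?_
  obtain ⟨m, hm, hml, hmT⟩ := h (ε / 3) (by positivity)
  rw [dist_eq_norm]
  calc ‖T l - l‖ ≤ ‖T l - T m‖ + ‖T m - m‖ + ‖m - l‖ :=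
        norm_sub_le_norm_sub_add_norm_sub _ _ _ |>.trans
          (add_le_add_left (norm_sub_le_norm_sub_add_norm_sub _ _ _) _)
    _ ≤ ε := by
        rw [norm_sub_rev (T m)]
        linarith [hT l hl m hm, norm_sub_rev l m]

variable [NormedSpace ℝ E]

theorem norm_midpoint_sub_apply_le (hT : ∀ x ∈ C, ∀ y ∈ C, ‖T x - T y‖ ≤ ‖x - y‖)
    (hC : Convex ℝ C) {ε δ : ℝ} (hε : 0 ≤ ε) (hδ : 0 < δ)
    (hUC : ∀ ρ : ℝ, ∀ ⦃x : E⦄, ‖x‖ ≤ ρ → ∀ ⦃y : E⦄, ‖y‖ ≤ ρ →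
      ε * ρ ≤ ‖x - y‖ → ‖x + y‖ ≤ (2 - δ) * ρ)
    {a b : E} (ha : a ∈ C) (hb : b ∈ C) :
    ‖midpoint ℝ a b - T (midpoint ℝ a b)‖ ≤
      (‖a - T a‖ + ‖b - T b‖) * (2⁻¹ + δ⁻¹) + ε * ‖a - b‖ / 4 := by
  set z := midpoint ℝ a b
  set D := ‖a - T a‖ + ‖b - T b‖
  set s := ‖a - b‖
  set u := T z - T a
  set v := T z - T b
  have hz : z ∈ C := hC.midpoint_mem ha hb
  have hu : ‖u‖ ≤ s / 2 := by
    refine (hT z hz a ha).trans_eq ?_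
    rw [midpoint_sub_eq_smul, sub_self, zero_add, norm_smul, norm_sub_rev]; norm_num; ring
  have hv : ‖-v‖ ≤ s / 2 := by
    rw [norm_neg]
    refine (hT z hz b hb).trans_eq ?_
    rw [midpoint_sub_eq_smul, sub_self, add_zero, norm_smul]; norm_num; ring
  have hsep : s - D ≤ ‖u + -v‖ := by
    have : a - b = (a - T a) - (b - T b) - (u + -v) := by simp only [u, v]; abel
    have h := norm_sub_le ((a - T a) - (b - T b)) (u + -v)
    rw [← this] at h
    linarith [norm_sub_le (a - T a) (b - T b)]
  have huv : ‖u + v‖ ≤ ε * s / 2 + 2 * D / δ := by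
    -- either `u` and `-v` are close, or uniform convexity makes `‖u - v‖ ≤ (2 - δ) * s / 2`
    by_cases hfar : ε * (s / 2) ≤ ‖u - -v‖
    · have hsD : δ * s ≤ 2 * D := by nlinarith [hUC (s / 2) hu hv hfar]
      have : s ≤ 2 * D / δ := by rw [le_div_iff₀ hδ]; linarith
      have : ‖u + v‖ ≤ s := by
        linarith [norm_add_le u v, norm_neg v]
      linarith [mul_nonneg hε (norm_nonneg (a - b))]
    · rw [sub_neg_eq_add] at hfar
      have : 0 ≤ 2 * D / δ := by positivity
      linarith
  have hdecomp : z - T z = (2⁻¹ : ℝ) • ((a - T a) + (b - T b)) - (2⁻¹ : ℝ) • (u + v) := by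
    simp only [u, v, z, midpoint_eq_smul_add, invOf_eq_inv]; module
  calc ‖z - T z‖ ≤ 2⁻¹ * D + 2⁻¹ * ‖u + v‖ := by
        rw [hdecomp]
        refine (norm_sub_le _ _).trans (add_le_add ?_ ?_) <;>
          rw [norm_smul, Real.norm_of_nonneg (by norm_num)]
        exact mul_le_mul_of_nonneg_left (norm_add_le _ _) (by norm_num)
    _ ≤ D * (2⁻¹ + δ⁻¹) + ε * s / 4 := by
        have : D * (2⁻¹ + δ⁻¹) = 2⁻¹ * D + D / δ := by ring
        have : 2 * D / δ = 2 * (D / δ) := by ring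
        linarith

theorem DyadicMean.exists_forall_norm_sub_apply_le [UniformConvexSpace E]
    (hT : ∀ x ∈ C, ∀ y ∈ C, ‖T x - T y‖ ≤ ‖x - y‖) (hC : Convex ℝ C) (c : E) (r : ℝ) (k : ℕ)
    {ε : ℝ} (hε : 0 < ε) :
    ∃ β, 0 < β ∧ ∀ S ⊆ C, S ⊆ closedBall c r → (∀ y ∈ S, ‖y - T y‖ ≤ β) →
      ∀ m, DyadicMean S k m → ‖m - T m‖ ≤ ε := by
  induction k generalizing ε with
  | zero =>
    refine ⟨ε, hε, fun S _ _ hS m hm => ?_⟩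
    cases hm with
    | of_mem hm => exact hS m hm
  | succ k ih =>
    obtain ⟨δ, hδ, hUC⟩ :=
      exists_forall_norm_add_le_two_sub_mul (E := E) (div_pos hε (by positivity : 0 < |r| + 1))
    -- `η` is chosen so that `2 * η * (2⁻¹ + δ⁻¹) = ε / 2`
    set η := ε * δ / (2 * (δ + 2))
    obtain ⟨β, hβ, hk⟩ := ih (by positivity : 0 < η)
    refine ⟨β, hβ, fun S hSC hSr hS m hm => ?_⟩
    cases hm with
    | mid ha hb =>
      rename_i a b
      have hconv := convexHull_min hSC hC
      have hball := convexHull_min hSr (convex_closedBall c r)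
      have hab : ‖a - b‖ ≤ 2 * (|r| + 1) := by
        have h₁ := mem_closedBall_iff_norm.1 (hball ha.mem_convexHull)
        have h₂ := mem_closedBall_iff_norm'.1 (hball hb.mem_convexHull)
        linarith [norm_sub_le_norm_sub_add_norm_sub a c b, le_abs_self r]
      have hD : ‖a - T a‖ + ‖b - T b‖ ≤ 2 * η := by
        linarith [hk S hSC hSr hS a ha, hk S hSC hSr hS b hb]
      calc ‖midpoint ℝ a b - T (midpoint ℝ a b)‖
          ≤ (‖a - T a‖ + ‖b - T b‖) * (2⁻¹ + δ⁻¹) + ε / (|r| + 1) * ‖a - b‖ / 4 :=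
            norm_midpoint_sub_apply_le hT hC (by positivity) hδ hUC
              (hconv ha.mem_convexHull) (hconv hb.mem_convexHull)
        _ ≤ 2 * η * (2⁻¹ + δ⁻¹) + ε / (|r| + 1) * (2 * (|r| + 1)) / 4 := by gcongr
        _ = ε := by simp only [η]; field_simp; ring

end Nonexpansive

section WeakConvergence

variable {E : Type*} [NormedAddCommGroup E] [NormedSpace ℝ E] {x : ℕ → E} {l : E}

theorem Convex.mem_of_forall_tendsto_dual {C : Set E} (hC : Convex ℝ C) (hCcl : IsClosed C)
    (hxC : ∀ n, x n ∈ C)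
    (hweak : ∀ f : E →L[ℝ] ℝ, Tendsto (fun n => f (x n)) atTop (𝓝 (f l))) : l ∈ C := by
  by_contra hl
  obtain ⟨f, u, hfC, hul⟩ := geometric_hahn_banach_closed_point hC hCcl hl
  exact (le_of_tendsto (hweak f) (Eventually.of_forall fun n => (hfC _ (hxC n)).le)).not_gt hul

theorem exists_forall_norm_sub_le_of_forall_tendsto_dual
    (hweak : ∀ f : E →L[ℝ] ℝ, Tendsto (fun n => f (x n)) atTop (𝓝 (f l))) :
    ∃ d, ∀ n, ‖x n - l‖ ≤ d := by
  obtain ⟨d, hd⟩ := banach_steinhaus (g := fun n => NormedSpace.inclusionInDoubleDual ℝ E (x n))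
    fun f => ((hweak f).norm.bddAbove_range).imp fun _ h => forall_mem_range.1 h
  refine ⟨d + ‖l‖, fun n => (norm_sub_le _ _).trans (add_le_add_left ?_ _)⟩
  exact ((NormedSpace.inclusionInDoubleDualLi ℝ).norm_map (x n)).symm.trans_le (hd n)

theorem exists_tail_convexHull_norm_sub_ge
    (hweak : ∀ f : E →L[ℝ] ℝ, Tendsto (fun n => f (x n)) atTop (𝓝 (f l))) (m : E) {ρ : ℝ}
    (hρ : 0 < ρ) : ∃ N, ∀ y ∈ convexHull ℝ (x '' Ici N), ‖m - l‖ - ρ ≤ ‖m - y‖ := by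
  rcases eq_or_ne m l with rfl | hml
  · exact ⟨0, fun y _ => by rw [sub_self, norm_zero]; linarith [norm_nonneg (m - y)]⟩
  obtain ⟨g, hg, hgml⟩ := exists_dual_vector ℝ (m - l) (norm_ne_zero_iff.2 (sub_ne_zero.2 hml))
  obtain ⟨N, hN⟩ := eventually_atTop.1 ((hweak g).eventually (eventually_le_nhds
    (lt_add_of_pos_right (g l) hρ)))
  have hhalfspace : convexHull ℝ (x '' Ici N) ⊆ {y | g y ≤ g l + ρ} :=
    convexHull_min (image_subset_iff.2 fun n hn => hN n hn) (convex_halfSpace_le g.isLinear _)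
  refine ⟨N, fun y hy => ?_⟩
  have hgy : g y ≤ g l + ρ := hhalfspace hy
  have : g (m - y) ≤ ‖m - y‖ :=
    (Real.le_norm_self _).trans (by simpa [hg] using g.le_opNorm (m - y))
  simp only [map_sub, RCLike.ofReal_real_eq_id, id] at hgml this
  linarith

theorem exists_dyadicMean_tail_succ_near
    (hweak : ∀ f : E →L[ℝ] ℝ, Tendsto (fun n => f (x n)) atTop (𝓝 (f l)))
    {k : ℕ} {θ r γ : ℝ} (hθ : 0 < θ)
    (hUC : ∀ ⦃u : E⦄, ‖u‖ ≤ r → ∀ ⦃v : E⦄, ‖v‖ ≤ r → θ / 2 ≤ ‖u - v‖ → ‖u + v‖ ≤ 2 * r - γ)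
    (hk : ∀ N, ∃ m, DyadicMean (x '' Ici N) k m ∧ ‖m - l‖ ≤ r) (N : ℕ) :
    ∃ m, DyadicMean (x '' Ici N) (k + 1) m ∧ ‖m - l‖ ≤ max θ (r - γ / 2) := by
  obtain ⟨m₁, hm₁, hm₁l⟩ := hk N
  by_cases hnear : ‖m₁ - l‖ ≤ θ
  · refine ⟨midpoint ℝ m₁ m₁, .mid hm₁ hm₁, ?_⟩
    rw [midpoint_self]
    exact le_max_of_le_left hnear
  obtain ⟨N₁, hN₁⟩ := exists_tail_convexHull_norm_sub_ge hweak m₁ (half_pos hθ)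
  obtain ⟨m₂, hm₂, hm₂l⟩ := hk (max N N₁)
  have htail : ∀ {M}, M ≤ max N N₁ → x '' Ici (max N N₁) ⊆ x '' Ici M :=
    fun h => image_mono (Ici_subset_Ici.2 h)
  have hsep : θ / 2 ≤ ‖(m₁ - l) - (m₂ - l)‖ := by
    rw [sub_sub_sub_cancel_right]
    linarith [hN₁ m₂ (hm₂.mono (htail (le_max_right N N₁))).mem_convexHull]
  refine ⟨midpoint ℝ m₁ m₂, .mid hm₁ (hm₂.mono (htail (le_max_left N N₁))),
    le_max_of_le_right ?_⟩
  rw [midpoint_sub_eq_smul, norm_smul, Real.norm_of_nonneg (by norm_num)]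
  linarith [hUC hm₁l hm₂l hsep]

theorem exists_dyadicMean_tail_near [UniformConvexSpace E]
    (hweak : ∀ f : E →L[ℝ] ℝ, Tendsto (fun n => f (x n)) atTop (𝓝 (f l)))
    {d θ : ℝ} (hd : ∀ n, ‖x n - l‖ ≤ d) (hθ : 0 < θ) :
    ∃ k, ∀ N, ∃ m, DyadicMean (x '' Ici N) k m ∧ ‖m - l‖ ≤ θ := by
  set D := max d θ
  have hθD : θ ≤ D := le_max_right d θ
  obtain ⟨δ, hδ, hUC⟩ :=
    exists_forall_norm_add_le_two_sub_mul (E := E) (div_pos hθ (by positivity : 0 < 2 * D))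
  -- Each level of midpoints shrinks the radius by `δ * θ / 2` until it reaches `θ`.
  have hrad : ∀ k N, ∃ m, DyadicMean (x '' Ici N) k m ∧
      ‖m - l‖ ≤ max θ (D - k * (δ * θ / 2)) := by
    intro k
    induction k with
    | zero => exact fun N => ⟨x N, .of_mem ⟨N, mem_Ici.2 le_rfl, rfl⟩, by
        rw [Nat.cast_zero, zero_mul, sub_zero]
        exact le_max_of_le_right ((hd N).trans (le_max_left d θ))⟩
    | succ k ih =>
      set r := max θ (D - k * (δ * θ / 2))
      have hθr : θ ≤ r := le_max_left _ _
      have hrD : r ≤ D := max_le hθD (sub_le_self _ (by positivity))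
      have hUCr : ∀ ⦃u : E⦄, ‖u‖ ≤ r → ∀ ⦃v : E⦄, ‖v‖ ≤ r → θ / 2 ≤ ‖u - v‖ →
          ‖u + v‖ ≤ 2 * r - δ * θ := fun u hu v hv huv => by
        have hsep : θ / (2 * D) * r ≤ ‖u - v‖ := by
          refine le_trans ?_ huv
          rw [div_mul_eq_mul_div, div_le_div_iff₀ (by positivity) two_pos]
          nlinarith
        nlinarith [hUC r hu hv hsep]
      intro N
      obtain ⟨m, hm, hml⟩ := exists_dyadicMean_tail_succ_near hweak hθ hUCr ih N
      refine ⟨m, hm, hml.trans (max_le (le_max_left _ _) ?_)⟩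
      push_cast
      rcases le_total θ (D - k * (δ * θ / 2)) with h | h
      · rw [show r = _ from max_eq_right h]; exact le_max_of_le_right (by linarith)
      · rw [show r = _ from max_eq_left h]
        exact le_max_of_le_left (sub_le_self _ (by positivity))
  obtain ⟨k, hk⟩ := exists_nat_ge ((D - θ) / (δ * θ / 2))
  refine ⟨k, fun N => (hrad k N).imp fun m hm => ⟨hm.1, hm.2.trans (max_le le_rfl ?_)⟩⟩
  rw [div_le_iff₀ (by positivity)] at hk
  linarith

end WeakConvergence

theorem demiclosedness_principle_general
    {E : Type*} [NormedAddCommGroup E] [NormedSpace ℝ E]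
    [UniformConvexSpace E]
    (C : Set E) (hCcl : IsClosed C) (hCcv : Convex ℝ C)
    (T : E → E)
    (hT : ∀ x ∈ C, ∀ y ∈ C, ‖T x - T y‖ ≤ ‖x - y‖)
    (x : ℕ → E) (hxC : ∀ n, x n ∈ C) (l : E)
    (hweak : ∀ f : E →L[ℝ] ℝ, Tendsto (fun n => f (x n)) atTop (nhds (f l)))
    (hreg : Tendsto (fun n => ‖x n - T (x n)‖) atTop (nhds 0)) :
    l ∈ C ∧ T l = l := by
  have hlC : l ∈ C := hCcv.mem_of_forall_tendsto_dual hCcl hxC hweak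
  obtain ⟨d, hd⟩ := exists_forall_norm_sub_le_of_forall_tendsto_dual hweak
  refine ⟨hlC, apply_eq_self_of_forall_exists_near hT hlC fun ζ hζ => ?_⟩
  obtain ⟨k, hk⟩ := exists_dyadicMean_tail_near hweak hd hζ
  obtain ⟨β, hβ, hdisp⟩ := DyadicMean.exists_forall_norm_sub_apply_le hT hCcv l d k hζ
  obtain ⟨N, hN⟩ := eventually_atTop.1 (hreg.eventually (eventually_le_nhds hβ))
  obtain ⟨m, hm, hml⟩ := hk N
  have hSC : x '' Ici N ⊆ C := image_subset_iff.2 fun n _ => hxC n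
  have hSl : x '' Ici N ⊆ closedBall l d :=
    image_subset_iff.2 fun n _ => mem_closedBall_iff_norm.2 (hd n)
  refine ⟨m, convexHull_min hSC hCcv hm.mem_convexHull, hml, hdisp _ hSC hSl ?_ m hm⟩
  rintro _ ⟨n, hn, rfl⟩
  exact hN n hn

theorem demiclosedness_principle
    {E : Type*} [NormedAddCommGroup E] [NormedSpace ℝ E]
    [UniformConvexSpace E] [CompleteSpace E]
    (C : Set E) (hCne : C.Nonempty) (hCcl : IsClosed C) (hCcv : Convex ℝ C)
    (T : E → E) (hTmaps : Set.MapsTo T C C)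
    (hT : ∀ x ∈ C, ∀ y ∈ C, ‖T x - T y‖ ≤ ‖x - y‖)
    (x : ℕ → E) (hxC : ∀ n, x n ∈ C) (l : E)
    (hweak : ∀ f : E →L[ℝ] ℝ, Tendsto (fun n => f (x n)) atTop (nhds (f l)))
    (hreg : Tendsto (fun n => ‖x n - T (x n)‖) atTop (nhds 0)) :
    l ∈ C ∧ T l = l :=
  demiclosedness_principle_general C hCcl hCcv T hT x hxC l hweak hreg
end

section
/- Let E be a uniformly convex Banach space, C ⊆ E nonempty closed convex, T : C → C nonexpansive with F(T) ≠ ∅, and x_n given by x_{n+1} = T y_n, y_n = (1-α_n) z_n + α_n T z_n, z_n = (1-β_n) x_n + β_n T x_n with α_n, β_n bounded away from 0 and 1. If T satisfies Condition (A), i.e., there is a nondecreasing f : [0,∞) → [0,∞) with f(0) = 0 and f(r) > 0 for r > 0 such that ‖x - Tx‖ ≥ f(d(x, F(T))) for all x ∈ C, then x_n converges strongly to a fixed point of T. -/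
/-!
The distance from the iterates to any fixed point `p` is nonincreasing, and already the inner
Mann step `z = (1 - β) x + β T x` moves `x` towards `p`. By uniform convexity, if `‖x_n - T x_n‖`
stayed above some `ε > 0` while `β_n` stays away from `0` and `1`, every step would bring `x_n`
closer to `p` by a fixed amount, which is absurd; so `‖x_n - T x_n‖` is arbitrarily small
infinitely often. Condition (A) turns this into `d(x_n, F) → 0` (this distance is nonincreasing),
and a Fejér monotone sequence approaching `F` is Cauchy, with limit in the closed set `F`.
-/

open Filter Metric Set Topology

section Metric

variable {X : Type*} [PseudoMetricSpace X]

def FejerMonotone (x : ℕ → X) (F : Set X) : Prop :=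
  ∀ q ∈ F, ∀ n, dist (x (n + 1)) q ≤ dist (x n) q

namespace FejerMonotone

variable {x : ℕ → X} {F : Set X}

theorem dist_le (h : FejerMonotone x F) {q : X} (hq : q ∈ F) {m n : ℕ} (hmn : m ≤ n) :
    dist (x n) q ≤ dist (x m) q :=
  antitone_nat_of_succ_le (f := fun n ↦ dist (x n) q) (h q hq) hmn

theorem infDist_antitone (h : FejerMonotone x F) (hF : F.Nonempty) :
    Antitone fun n ↦ infDist (x n) F :=
  antitone_nat_of_succ_le fun n ↦
    (le_infDist hF).2 fun _ hq ↦ (infDist_le_dist_of_mem hq).trans (h _ hq n)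

theorem cauchySeq (h : FejerMonotone x F) (hF : F.Nonempty)
    (hd : Tendsto (fun n ↦ infDist (x n) F) atTop (𝓝 0)) : CauchySeq x := by
  refine Metric.cauchySeq_iff'.2 fun ε hε ↦ ?_
  obtain ⟨N, hN⟩ := (hd.eventually (gt_mem_nhds (half_pos hε))).exists
  obtain ⟨q, hq, hNq⟩ := (infDist_lt_iff hF).1 hN
  refine ⟨N, fun n hn ↦ ?_⟩
  calc dist (x n) (x N) ≤ dist (x n) q + dist (x N) q := dist_triangle_right _ _ _
    _ ≤ 2 * dist (x N) q := by linarith [h.dist_le hq hn]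
    _ < ε := by linarith

theorem exists_tendsto [CompleteSpace X] (h : FejerMonotone x F) (hF : F.Nonempty)
    (hFc : IsClosed F) (hd : Tendsto (fun n ↦ infDist (x n) F) atTop (𝓝 0)) :
    ∃ q ∈ F, Tendsto x atTop (𝓝 q) := by
  obtain ⟨q, hq⟩ := cauchySeq_tendsto_of_complete (h.cauchySeq hF hd)
  have hq0 : infDist q F = 0 :=
    tendsto_nhds_unique (((continuous_infDist_pt F).tendsto q).comp hq) hd
  exact ⟨q, (hFc.mem_iff_infDist_zero hF).2 hq0, hq⟩

end FejerMonotone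

theorem dist_apply_le_of_isFixedPt {C : Set X} {T : X → X} {p : X} (hT : LipschitzOnWith 1 T C)
    (hp : p ∈ C) (hTp : T p = p) {u : X} (hu : u ∈ C) : dist (T u) p ≤ dist u p := by
  simpa [hTp] using hT.dist_le_mul u hu p hp

end Metric

theorem tendsto_zero_of_antitone_of_frequently_lt {d : ℕ → ℝ} (hd : Antitone d)
    (hd0 : ∀ n, 0 ≤ d n) (h : ∀ ε > 0, ∃ᶠ n in atTop, d n < ε) :
    Tendsto d atTop (𝓝 0) := by
  refine tendsto_order.2 ⟨fun a ha ↦ Eventually.of_forall fun n ↦ ha.trans_le (hd0 n),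
    fun ε hε ↦ ?_⟩
  obtain ⟨N, hN⟩ := (h ε hε).exists
  exact eventually_atTop.2 ⟨N, fun n hn ↦ (hd hn).trans_lt hN⟩

theorem not_eventually_le_sub_of_nonneg {d : ℕ → ℝ} {γ : ℝ} (hd : ∀ n, 0 ≤ d n) (hγ : 0 < γ) :
    ¬ ∀ᶠ n in atTop, d (n + 1) ≤ d n - γ := by
  intro h
  obtain ⟨N, hN⟩ := eventually_atTop.1 h
  have hdrop : ∀ k : ℕ, d (N + k) ≤ d N - k * γ := by
    intro k
    induction k with
    | zero => simp
    | succ k ih =>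
      rw [← add_assoc]
      push_cast
      linarith [hN (N + k) (Nat.le_add_right N k)]
  obtain ⟨k, hk⟩ := exists_nat_gt (d N / γ)
  rw [div_lt_iff₀ hγ] at hk
  linarith [hdrop k, hd (N + k)]

theorem frequently_lt_of_le_comp {f : ℝ → ℝ} (hfmono : ∀ r s, 0 ≤ r → r ≤ s → f r ≤ f s)
    (hfpos : ∀ r : ℝ, 0 < r → 0 < f r) {d g : ℕ → ℝ} (hfg : ∀ n, f (d n) ≤ g n)
    (hg : ∀ ε > 0, ∃ᶠ n in atTop, g n < ε) : ∀ ε > 0, ∃ᶠ n in atTop, d n < ε :=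
  fun ε hε ↦ (hg _ (hfpos ε hε)).mono fun n hn ↦
    lt_of_not_ge fun hεd ↦ ((hfmono _ _ hε.le hεd).trans (hfg n)).not_gt hn

section Normed

variable {E : Type*} [NormedAddCommGroup E] [NormedSpace ℝ E]

theorem norm_one_sub_smul_add_smul_le {u v : E} {δ s t : ℝ} (hvu : ‖v‖ ≤ ‖u‖)
    (huv : ‖u + v‖ ≤ 2 * ‖u‖ - δ) (hs : 0 ≤ s) (hst : s ≤ t) (hst' : s ≤ 1 - t) :
    ‖(1 - t) • u + t • v‖ ≤ ‖u‖ - s * δ := by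
  have hsplit : (1 - t) • u + t • v = (1 - t - s) • u + (t - s) • v + s • (u + v) := by module
  rw [hsplit]
  calc ‖(1 - t - s) • u + (t - s) • v + s • (u + v)‖
      ≤ (1 - t - s) * ‖u‖ + (t - s) * ‖v‖ + s * ‖u + v‖ := by
        refine norm_add₃_le.trans ?_
        rw [norm_smul_of_nonneg (by linarith), norm_smul_of_nonneg (by linarith),
          norm_smul_of_nonneg hs]
    _ ≤ (1 - t - s) * ‖u‖ + (t - s) * ‖u‖ + s * (2 * ‖u‖ - δ) := by
        gcongr
    _ = ‖u‖ - s * δ := by ring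

theorem exists_forall_norm_add_le_two_mul_norm_sub [UniformConvexSpace E] {ε : ℝ} (hε : 0 < ε)
    (R : ℝ) : ∃ δ > 0, ∀ ⦃u v : E⦄, ‖v‖ ≤ ‖u‖ → ‖u‖ ≤ R → ε ≤ ‖u - v‖ →
      ‖u + v‖ ≤ 2 * ‖u‖ - δ := by
  -- Rescale `u, v` by `‖u‖ ≥ ε / 2` into the unit ball, where they stay `ε / max R ε` apart.
  have hR : 0 < max R ε := lt_max_of_lt_right hε
  obtain ⟨δ, hδ, hball⟩ := exists_forall_closed_ball_dist_add_le_two_sub E (div_pos hε hR)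
  refine ⟨δ * (ε / 2), by positivity, fun u v hvu huR huv ↦ ?_⟩
  have hε2 : ε / 2 ≤ ‖u‖ := by linarith [norm_sub_le u v]
  have hu : 0 < ‖u‖ := by linarith
  have hscale : ∀ w : E, ‖‖u‖⁻¹ • w‖ = ‖w‖ / ‖u‖ := fun w ↦ by
    rw [norm_smul_of_nonneg (inv_nonneg.2 hu.le), inv_mul_eq_div]
  have hsum := hball (x := ‖u‖⁻¹ • u) (y := ‖u‖⁻¹ • v)
    (by rw [hscale, div_self hu.ne'])
    (by rw [hscale, div_le_one hu]; exact hvu)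
    (by
      rw [← smul_sub, hscale]
      calc ε / max R ε ≤ ε / ‖u‖ :=
            div_le_div_of_nonneg_left hε.le hu (huR.trans (le_max_left _ _))
        _ ≤ ‖u - v‖ / ‖u‖ := by gcongr)
  rw [← smul_add, hscale, div_le_iff₀ hu] at hsum
  linarith [mul_le_mul_of_nonneg_left hε2 hδ.le]

end Normed

section Mann

variable {E : Type*} [NormedAddCommGroup E] [NormedSpace ℝ E] {C : Set E} {T : E → E}

def mann (T : E → E) (t : ℝ) (u : E) : E :=
  (1 - t) • u + t • T u

theorem mann_mem (hC : Convex ℝ C) (hTC : MapsTo T C C) {u : E} (hu : u ∈ C) {t : ℝ}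
    (ht : t ∈ Icc (0 : ℝ) 1) : mann T t u ∈ C :=
  hC hu (hTC hu) (by linarith [ht.2]) ht.1 (by ring)

variable {p : E}

theorem dist_mann_le (hT : LipschitzOnWith 1 T C) (hp : p ∈ C) (hTp : T p = p) {u : E}
    (hu : u ∈ C) {t : ℝ} (ht : t ∈ Icc (0 : ℝ) 1) : dist (mann T t u) p ≤ dist u p :=
  convex_closedBall p (dist u p) (mem_closedBall.2 le_rfl)
    (mem_closedBall.2 (dist_apply_le_of_isFixedPt hT hp hTp hu)) (by linarith [ht.2]) ht.1
    (by ring)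

theorem exists_dist_mann_le_sub [UniformConvexSpace E] (hT : LipschitzOnWith 1 T C)
    (hp : p ∈ C) (hTp : T p = p) {ε : ℝ} (hε : 0 < ε) (R : ℝ) :
    ∃ δ > 0, ∀ u ∈ C, dist u p ≤ R → ε ≤ ‖u - T u‖ → ∀ s t : ℝ, 0 ≤ s → s ≤ t → s ≤ 1 - t →
      dist (mann T t u) p ≤ dist u p - s * δ := by
  obtain ⟨δ, hδ, hadd⟩ := exists_forall_norm_add_le_two_mul_norm_sub (E := E) hε R
  refine ⟨δ, hδ, fun u hu huR hTu s t hs hst hst' ↦ ?_⟩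
  have hvu : ‖T u - p‖ ≤ ‖u - p‖ := by
    simpa only [dist_eq_norm] using dist_apply_le_of_isFixedPt hT hp hTp hu
  have hdiff : (u - p) - (T u - p) = u - T u := by abel
  have hcombo : mann T t u - p = (1 - t) • (u - p) + t • (T u - p) := by
    unfold mann; module
  rw [dist_eq_norm, dist_eq_norm, hcombo]
  rw [dist_eq_norm] at huR
  exact norm_one_sub_smul_add_smul_le hvu (hadd hvu huR (hdiff ▸ hTu)) hs hst hst'

theorem frequently_norm_sub_apply_lt [UniformConvexSpace E] (hT : LipschitzOnWith 1 T C)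
    (hp : p ∈ C) (hTp : T p = p) {a b : ℝ} (ha : 0 < a) (hb : b < 1) {β : ℕ → ℝ}
    (hβ : ∀ n, β n ∈ Icc a b) {x : ℕ → E} (hxC : ∀ n, x n ∈ C)
    (hx : ∀ n, dist (x (n + 1)) p ≤ dist (mann T (β n) (x n)) p) {ε : ℝ} (hε : 0 < ε) :
    ∃ᶠ n in atTop, ‖x n - T (x n)‖ < ε := by
  by_contra h
  simp only [not_frequently, not_lt] at h
  obtain ⟨N, hN⟩ := eventually_atTop.1 h
  have hβI : ∀ n, β n ∈ Icc (0 : ℝ) 1 := fun n ↦ Icc_subset_Icc ha.le hb.le (hβ n)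
  have hanti : Antitone fun n ↦ dist (x n) p :=
    antitone_nat_of_succ_le fun n ↦ (hx n).trans (dist_mann_le hT hp hTp (hxC n) (hβI n))
  obtain ⟨δ, hδ, hdrop⟩ := exists_dist_mann_le_sub hT hp hTp hε (dist (x N) p)
  have hs : 0 < min a (1 - b) := lt_min ha (by linarith)
  refine not_eventually_le_sub_of_nonneg (fun n ↦ dist_nonneg) (mul_pos hs hδ)
    (eventually_atTop.2 ⟨N, fun n hn ↦ (hx n).trans ?_⟩)
  exact hdrop _ (hxC n) (hanti hn) (hN n hn) _ _ hs.le ((min_le_left _ _).trans (hβ n).1)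
    ((min_le_right _ _).trans (by linarith [(hβ n).2]))

end Mann

theorem strong_convergence_condition_A_general
    {E : Type*} [NormedAddCommGroup E] [NormedSpace ℝ E]
    [UniformConvexSpace E] [CompleteSpace E]
    (C : Set E) (hCcl : IsClosed C) (hCcv : Convex ℝ C)
    (T : E → E) (hTmaps : Set.MapsTo T C C)
    (hT : ∀ x ∈ C, ∀ y ∈ C, ‖T x - T y‖ ≤ ‖x - y‖)
    (F : Set E) (hFdef : F = {p ∈ C | T p = p}) (hFne : F.Nonempty)
    (a b : ℝ) (ha : 0 < a) (hb : b < 1)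
    (α β : ℕ → ℝ)
    (hα : ∀ n, a ≤ α n ∧ α n ≤ b) (hβ : ∀ n, a ≤ β n ∧ β n ≤ b)
    (x y z : ℕ → E) (hx0 : x 0 ∈ C)
    (hz : ∀ n, z n = (1 - β n) • x n + β n • T (x n))
    (hy : ∀ n, y n = (1 - α n) • z n + α n • T (z n))
    (hx : ∀ n, x (n + 1) = T (y n))
    (f : ℝ → ℝ) (hfmono : ∀ r s, 0 ≤ r → r ≤ s → f r ≤ f s)
    (hfpos : ∀ r : ℝ, 0 < r → 0 < f r)
    (hcondA : ∀ w ∈ C, f (Metric.infDist w F) ≤ ‖w - T w‖) :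
    ∃ q ∈ F, Tendsto x atTop (nhds q) := by
  subst hFdef
  have hTlip : LipschitzOnWith 1 T C := .mk_one (by simpa only [dist_eq_norm] using hT)
  have hαI : ∀ n, α n ∈ Icc (0 : ℝ) 1 := fun n ↦ ⟨ha.le.trans (hα n).1, (hα n).2.trans hb.le⟩
  have hβI : ∀ n, β n ∈ Icc (0 : ℝ) 1 := fun n ↦ ⟨ha.le.trans (hβ n).1, (hβ n).2.trans hb.le⟩
  have hz : ∀ n, z n = mann T (β n) (x n) := hz
  have hy : ∀ n, y n = mann T (α n) (z n) := hy
  have hxC : ∀ n, x n ∈ C := Nat.rec hx0 fun n hn ↦ hx n ▸ hTmaps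
    (hy n ▸ mann_mem hCcv hTmaps (hz n ▸ mann_mem hCcv hTmaps hn (hβI n)) (hαI n))
  have hsucc : ∀ q ∈ {p ∈ C | T p = p}, ∀ n, dist (x (n + 1)) q ≤ dist (z n) q := by
    rintro q ⟨hqC, hTq⟩ n
    have hzC : z n ∈ C := hz n ▸ mann_mem hCcv hTmaps (hxC n) (hβI n)
    have hyC : y n ∈ C := hy n ▸ mann_mem hCcv hTmaps hzC (hαI n)
    calc dist (x (n + 1)) q ≤ dist (y n) q :=
          hx n ▸ dist_apply_le_of_isFixedPt hTlip hqC hTq hyC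
      _ ≤ dist (z n) q := hy n ▸ dist_mann_le hTlip hqC hTq hzC (hαI n)
  have hfejer : FejerMonotone x {p ∈ C | T p = p} := fun q hq n ↦
    (hsucc q hq n).trans (hz n ▸ dist_mann_le hTlip hq.1 hq.2 (hxC n) (hβI n))
  have ⟨p, hpC, hTp⟩ := hFne
  have hsmall : ∀ ε > 0, ∃ᶠ n in atTop, ‖x n - T (x n)‖ < ε := fun ε hε ↦
    frequently_norm_sub_apply_lt hTlip hpC hTp ha hb hβ hxC
      (fun n ↦ hz n ▸ hsucc p ⟨hpC, hTp⟩ n) hε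
  have hdist : Tendsto (fun n ↦ infDist (x n) {p ∈ C | T p = p}) atTop (𝓝 0) :=
    tendsto_zero_of_antitone_of_frequently_lt (hfejer.infDist_antitone hFne)
      (fun _ ↦ infDist_nonneg)
      (frequently_lt_of_le_comp hfmono hfpos (fun n ↦ hcondA _ (hxC n)) hsmall)
  exact hfejer.exists_tendsto hFne (hCcl.isClosed_eq hTlip.continuousOn continuousOn_id) hdist

theorem strong_convergence_condition_A
    {E : Type*} [NormedAddCommGroup E] [NormedSpace ℝ E]
    [UniformConvexSpace E] [CompleteSpace E]
    (C : Set E) (hCne : C.Nonempty) (hCcl : IsClosed C) (hCcv : Convex ℝ C)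
    (T : E → E) (hTmaps : Set.MapsTo T C C)
    (hT : ∀ x ∈ C, ∀ y ∈ C, ‖T x - T y‖ ≤ ‖x - y‖)
    (F : Set E) (hFdef : F = {p ∈ C | T p = p}) (hFne : F.Nonempty)
    (a b : ℝ) (ha : 0 < a) (hb : b < 1)
    (α β : ℕ → ℝ)
    (hα : ∀ n, a ≤ α n ∧ α n ≤ b) (hβ : ∀ n, a ≤ β n ∧ β n ≤ b)
    (x y z : ℕ → E) (hx0 : x 0 ∈ C)
    (hz : ∀ n, z n = (1 - β n) • x n + β n • T (x n))
    (hy : ∀ n, y n = (1 - α n) • z n + α n • T (z n))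
    (hx : ∀ n, x (n + 1) = T (y n))
    (f : ℝ → ℝ) (hfmono : ∀ r s, 0 ≤ r → r ≤ s → f r ≤ f s)
    (hf0 : f 0 = 0) (hfpos : ∀ r : ℝ, 0 < r → 0 < f r)
    (hcondA : ∀ w ∈ C, f (Metric.infDist w F) ≤ ‖w - T w‖) :
    ∃ q ∈ F, Tendsto x atTop (nhds q) :=
  strong_convergence_condition_A_general C hCcl hCcv T hTmaps hT F hFdef hFne a b ha hb α β hα hβ x
    y z hx0 hz hy hx f hfmono hfpos hcondA
end
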